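/- If n ≥ 2, x ≥ 1, and U_n^x + U_{n+1}^x = U_{nx-1}, then U_n divides x·r. -/

import Mathlib

/-!
Write `n = m + 1`. The addition formula `U (a + b + 1) = U (a + 1) U (b + 1) + U a U b` gives
`U n ∣ U (n k)` and hence `U (n k - 1) ≡ U (n - 1) ^ k (mod U n ^ 2)`. On the other side
`U (n + 1) = r U n + U (n - 1)`, so `U (n + 1) ^ x ≡ U (n - 1) ^ x + x r U n U (n - 1) ^ (x - 1)`
modulo `U n ^ 2`, while `U n ^ x ≡ 0` once `x ≥ 2` (and `x = 1` is impossible since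
`U (n + 1) > U (n - 1)`). Comparing, `U n ^ 2 ∣ U n · x r U (n - 1) ^ (x - 1)`; cancel `U n` and
use that consecutive terms are coprime.
-/

def U (r : ℕ) : ℕ → ℕ
  | 0 => 0
  | 1 => 1
  | n + 2 => r * U r (n + 1) + U r n

def V (r : ℕ) : ℕ → ℕ
  | 0 => 2
  | 1 => r
  | n + 2 => r * V r (n + 1) + V r n

theorem Nat.add_pow_modEq_sq (p x n : ℕ) :
    x ^ n + x ^ (n - 1) * p * n ≡ (x + p) ^ n [MOD p ^ 2] := by
  rw [Nat.modEq_iff_dvd]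
  push_cast
  simpa only [sub_sub, add_comm] using sq_dvd_add_pow_sub_sub (p : ℤ) x n

section

variable (r : ℕ)

theorem U_add_two (n : ℕ) : U r (n + 2) = r * U r (n + 1) + U r n := rfl

theorem U_add_add_one (a b : ℕ) :
    U r (a + b + 1) = U r (a + 1) * U r (b + 1) + U r a * U r b := by
  induction a using Nat.twoStepInduction with
  | zero => simp [U]
  | one => rw [add_comm 1 b, U_add_two]; simp [U]
  | more a ih₁ ih₂ =>
    have h := U_add_two r (a + b + 1)
    rw [show a + b + 1 + 2 = a + 2 + b + 1 by omega,
      show a + b + 1 + 1 = a + 1 + b + 1 by omega] at h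
    have h₁ : U r (a + 2 + 1) = r * U r (a + 2) + U r (a + 1) := U_add_two r (a + 1)
    have h₂ : U r (a + 2) = r * U r (a + 1) + U r a := U_add_two r a
    rw [h, ih₁, ih₂, h₁, h₂]
    ring

theorem U_pos {r : ℕ} (hr : 0 < r) {n : ℕ} (hn : 0 < n) : 0 < U r n := by
  induction n using Nat.twoStepInduction with
  | zero => exact absurd hn (lt_irrefl 0)
  | one => simp [U]
  | more n _ ih => rw [U_add_two]; exact Nat.add_pos_left (Nat.mul_pos hr (ih n.succ_pos)) _

theorem coprime_U_succ (n : ℕ) : (U r n).Coprime (U r (n + 1)) := by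
  induction n with
  | zero => simp [U]
  | succ n ih =>
    rw [U_add_two, Nat.coprime_mul_right_add_right]
    exact ih.symm

theorem U_dvd_U_mul (n k : ℕ) : U r n ∣ U r (n * k) := by
  induction k with
  | zero => simp [U]
  | succ k ih =>
    rcases n with _ | m
    · simp [U]
    rw [show (m + 1) * (k + 1) = (m + 1) * k + m + 1 by ring, U_add_add_one]
    exact dvd_add (dvd_mul_left _ _) (dvd_mul_of_dvd_left ih _)

theorem U_mul_add_modEq (m k : ℕ) :
    U r ((m + 1) * k + m) ≡ U r m ^ (k + 1) [MOD U r (m + 1) ^ 2] := by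
  induction k with
  | zero => simp [Nat.ModEq.refl]
  | succ k ih =>
    rw [show (m + 1) * (k + 1) + m = (m + 1) * k + m + m + 1 by ring, U_add_add_one,
      show (m + 1) * k + m + 1 = (m + 1) * (k + 1) by ring]
    have hdvd : U r (m + 1) ^ 2 ∣ U r ((m + 1) * (k + 1)) * U r (m + 1) :=
      sq (U r (m + 1)) ▸ mul_dvd_mul_right (U_dvd_U_mul r _ _) _
    calc _ ≡ 0 + U r m ^ (k + 1) * U r m [MOD U r (m + 1) ^ 2] :=
          (Nat.modEq_zero_iff_dvd.mpr hdvd).add (ih.mul_right _)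
      _ = U r m ^ (k + 1 + 1) := by ring

theorem sq_U_dvd_of_pow_add_pow_eq {m x : ℕ} (hx : 2 ≤ x)
    (h : U r (m + 1) ^ x + U r (m + 2) ^ x = U r ((m + 1) * x - 1)) :
    U r (m + 1) ^ 2 ∣ U r (m + 1) * (U r m ^ (x - 1) * (x * r)) := by
  set u := U r (m + 1)
  set v := U r m
  have hbinom : v ^ x + v ^ (x - 1) * (r * u) * x ≡ U r (m + 2) ^ x [MOD u ^ 2] := by
    rw [U_add_two, add_comm (r * _)]
    exact (Nat.add_pow_modEq_sq (r * u) v x).of_dvd (mul_pow r u 2 ▸ dvd_mul_left _ _)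
  have hu : u ^ x ≡ 0 [MOD u ^ 2] := Nat.modEq_zero_iff_dvd.mpr (pow_dvd_pow u hx)
  have hv : U r ((m + 1) * x - 1) ≡ v ^ x [MOD u ^ 2] := by
    obtain ⟨k, rfl⟩ : ∃ k, x = k + 1 := ⟨x - 1, by omega⟩
    rw [show (m + 1) * (k + 1) - 1 = (m + 1) * k + m by rw [mul_add_one]; omega]
    exact U_mul_add_modEq r m k
  have : v ^ x + v ^ (x - 1) * (r * u) * x ≡ v ^ x + 0 [MOD u ^ 2] :=
    calc _ ≡ 0 + U r (m + 2) ^ x [MOD u ^ 2] := by rw [zero_add]; exact hbinom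
      _ ≡ u ^ x + U r (m + 2) ^ x [MOD u ^ 2] := hu.symm.add_right _
      _ = U r ((m + 1) * x - 1) := h
      _ ≡ v ^ x + 0 [MOD u ^ 2] := hv
  have := Nat.modEq_zero_iff_dvd.mp (Nat.ModEq.add_left_cancel' _ this)
  convert this using 1
  ring

end

theorem stmt_14 (r : ℕ) (hr : 1 ≤ r) (n x : ℕ) (hn : 2 ≤ n) (hx : 1 ≤ x)
    (h : U r n ^ x + U r (n + 1) ^ x = U r (n * x - 1)) :
    U r n ∣ x * r := by
  obtain ⟨m, rfl⟩ : ∃ m, n = m + 1 := ⟨n - 1, by omega⟩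
  have hu : 0 < U r (m + 1) := U_pos hr m.succ_pos
  have hx2 : 2 ≤ x := by
    by_contra! hlt
    obtain rfl : x = 1 := by omega
    simp only [pow_one, mul_one, Nat.add_sub_cancel] at h
    have : U r (m + 1 + 1) = r * U r (m + 1) + U r m := rfl
    omega
  have hdvd := sq_U_dvd_of_pow_add_pow_eq r hx2 h
  rw [sq] at hdvd
  exact ((coprime_U_succ r m).symm.pow_right _).dvd_of_dvd_mul_left
    (Nat.dvd_of_mul_dvd_mul_left hu hdvd)
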